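/- arXiv:1312.5676 — 4 statements merged into one kernel-verified Lean document; each statement's English description precedes it below -/
import Mathlib

section
/- The degree 2 component of the divided power algebra over ℤ of the ℤ-module ℤ/2 is isomorphic to ℤ/4, i.e. Γ²_ℤ(ℤ/2) ≅ ℤ/4. -/
/-- The structure of a "divided square datum" on an abelian group `B` for the abelian group
`A`: functions `γ = γ₂` and `h = (x,y) ↦ γ₁(x)γ₁(y)` satisfying the defining relations of
`Γ²_ℤ(A)`: `γ₁(x)² = 2γ₂(x)`, `γ₂(x+y) = γ₂(x) + γ₁(x)γ₁(y) + γ₂(y)`, `γ₂(λx) = λ²γ₂(x)`,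
together with biadditivity and symmetry of the products `γ₁(x)γ₁(y)`. -/
def IsDividedSquareDatum {A B : Type*} [AddCommGroup A] [AddCommGroup B]
    (γ : A → B) (h : A → A → B) : Prop :=
  (∀ x : A, h x x = 2 • γ x) ∧
  (∀ x y : A, γ (x + y) = γ x + h x y + γ y) ∧
  (∀ (n : ℤ) (x : A), γ (n • x) = n ^ 2 • γ x) ∧
  (∀ x y z : A, h (x + y) z = h x z + h y z) ∧
  (∀ x y z : A, h x (y + z) = h x y + h x z) ∧
  (∀ x y : A, h x y = h y x)

/-- `Γ²_ℤ(ℤ/2) ≅ ℤ/4`.  The degree 2 component of the divided power algebra of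
the abelian group `ℤ/2` is presented by the generators `γ₂(x)` and `γ₁(x)γ₁(y)` and the
relations above; so the assertion is that `ℤ/4`, equipped with suitable `γ₂` and
`γ₁(·)γ₁(·)`, is the universal (initial) abelian group carrying such a datum for `A = ℤ/2`. -/
theorem gamma_sq_of_zmod_two_eq_zmod_four :
    ∃ (γ : ZMod 2 → ZMod 4) (h : ZMod 2 → ZMod 2 → ZMod 4),
      IsDividedSquareDatum γ h ∧
      ∀ (B : Type) [AddCommGroup B] (γ' : ZMod 2 → B) (h' : ZMod 2 → ZMod 2 → B),
        IsDividedSquareDatum γ' h' →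
        ∃! f : ZMod 4 →+ B, (∀ x, f (γ x) = γ' x) ∧ (∀ x y, f (h x y) = h' x y) := by
  refine ⟨fun x => (x.val : ZMod 4), fun x y => 2 * x.val * y.val, ⟨?_, ?_, ?_, ?_, ?_, ?_⟩, ?_⟩
  · decide
  · decide
  · intro n x
    rw [zsmul_eq_mul, zsmul_eq_mul]
    push_cast
    have h3 : ((n : ZMod 2)) = ZMod.castHom (show (2:ℕ) ∣ 4 by norm_num) (ZMod 2) ((n : ZMod 4)) := by
      simp
    rw [h3]
    generalize ((n : ZMod 4)) = m
    revert x m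
    decide
  · decide
  · decide
  · decide
  · intro B _ γ' h' ⟨d1, d2, d3, d4, d5, d6⟩
    have hγ0 : γ' 0 = 0 := by
      have := d3 0 0; simpa using this
    have hh0 : ∀ x, h' x 0 = 0 := fun x => by
      have := d5 x 0 0; simpa using this.symm
    have hh0' : ∀ x, h' 0 x = 0 := fun x => by rw [d6]; exact hh0 x
    have h4 : (4 : ℤ) • γ' 1 = 0 := by
      have e : γ' (1 + 1 : ZMod 2) = γ' 1 + h' 1 1 + γ' 1 := d2 1 1
      have h11 : (1 + 1 : ZMod 2) = 0 := by decide
      rw [h11, hγ0, d1 1] at e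
      calc (4 : ℤ) • γ' 1 = γ' 1 + 2 • γ' 1 + γ' 1 := by abel
        _ = 0 := e.symm
    set f : ZMod 4 →+ B := ZMod.lift 4 ⟨zmultiplesHom B (γ' 1), by simpa using h4⟩ with hf
    have fcast : ∀ m : ℤ, f ((m : ZMod 4)) = m • γ' 1 := fun m => ZMod.lift_coe 4 _ m
    have hx2 : ∀ y : ZMod 2, y = 0 ∨ y = 1 := by decide
    refine ⟨f, ⟨?_, ?_⟩, ?_⟩
    · intro x
      rcases hx2 x with rfl | rfl
      · show f ((ZMod.val (0 : ZMod 2) : ℕ) : ZMod 4) = γ' 0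
        rw [show ((ZMod.val (0 : ZMod 2) : ℕ) : ZMod 4) = ((0 : ℤ) : ZMod 4) by decide,
          fcast, hγ0]
        simp
      · show f ((ZMod.val (1 : ZMod 2) : ℕ) : ZMod 4) = γ' 1
        rw [show ((ZMod.val (1 : ZMod 2) : ℕ) : ZMod 4) = ((1 : ℤ) : ZMod 4) by decide,
          fcast, one_smul]
    · intro x y
      rcases hx2 x with rfl | rfl <;> rcases hx2 y with rfl | rfl
      · show f (2 * (ZMod.val (0 : ZMod 2) : ZMod 4) * (ZMod.val (0 : ZMod 2) : ZMod 4)) = h' 0 0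
        rw [show (2 * (ZMod.val (0 : ZMod 2) : ZMod 4) * (ZMod.val (0 : ZMod 2) : ZMod 4))
            = ((0 : ℤ) : ZMod 4) by decide, fcast, zero_smul, hh0]
      · show f (2 * (ZMod.val (0 : ZMod 2) : ZMod 4) * (ZMod.val (1 : ZMod 2) : ZMod 4)) = h' 0 1
        rw [show (2 * (ZMod.val (0 : ZMod 2) : ZMod 4) * (ZMod.val (1 : ZMod 2) : ZMod 4))
            = ((0 : ℤ) : ZMod 4) by decide, fcast, zero_smul, hh0']
      · show f (2 * (ZMod.val (1 : ZMod 2) : ZMod 4) * (ZMod.val (0 : ZMod 2) : ZMod 4)) = h' 1 0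
        rw [show (2 * (ZMod.val (1 : ZMod 2) : ZMod 4) * (ZMod.val (0 : ZMod 2) : ZMod 4))
            = ((0 : ℤ) : ZMod 4) by decide, fcast, zero_smul, hh0]
      · show f (2 * (ZMod.val (1 : ZMod 2) : ZMod 4) * (ZMod.val (1 : ZMod 2) : ZMod 4)) = h' 1 1
        rw [show (2 * (ZMod.val (1 : ZMod 2) : ZMod 4) * (ZMod.val (1 : ZMod 2) : ZMod 4))
            = ((2 : ℤ) : ZMod 4) by decide, fcast, d1 1, two_zsmul, two_nsmul]
    · rintro g ⟨hg1, hg2⟩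
      ext1 a
      obtain ⟨m, rfl⟩ := ZMod.intCast_surjective a
      rw [fcast m, show ((m : ℤ) : ZMod 4) = m • (1 : ZMod 4) by rw [zsmul_one], map_zsmul]
      congr 1
      have h1 : g ((ZMod.val (1 : ZMod 2) : ℕ) : ZMod 4) = γ' 1 := hg1 1
      rwa [show ((ZMod.val (1 : ZMod 2) : ℕ) : ZMod 4) = 1 by decide] at h1
end

section
/- For a positive integer d ≥ 2, the greatest common divisor of the binomial coefficients C(d, k) for 0 < k < d equals p if d is a power of a prime p, and equals 1 if d is not a prime power. -/
open Finset

lemma gcd_dvd_d (d : ℕ) (hd : 2 ≤ d) :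
    (Finset.Ioo 0 d).gcd (fun k => d.choose k) ∣ d := by
  have h1 : (1 : ℕ) ∈ Finset.Ioo 0 d := by
    simp [Finset.mem_Ioo]; omega
  simpa using Finset.gcd_dvd (f := fun k => d.choose k) h1

/-- For `d ≥ 2`, the gcd of the binomial coefficients `C(d,k)` for `0 < k < d`
equals `p` if `d` is a power of a prime `p` (with exponent `≥ 1`), and equals `1` if `d` is
not a prime power. -/
theorem gcd_interior_binomials (d : ℕ) (hd : 2 ≤ d) :
    (∀ p r : ℕ, p.Prime → 1 ≤ r → d = p ^ r →
      (Finset.Ioo 0 d).gcd (fun k => d.choose k) = p) ∧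
    ((¬ ∃ p r : ℕ, p.Prime ∧ 1 ≤ r ∧ d = p ^ r) →
      (Finset.Ioo 0 d).gcd (fun k => d.choose k) = 1) := by
  constructor
  · rintro p r hp hr rfl
    set g := (Finset.Ioo 0 (p ^ r)).gcd (fun k => (p ^ r).choose k) with hg
    have hgd : g ∣ p ^ r := gcd_dvd_d _ hd
    -- p divides every interior binomial coefficient
    have hpg : p ∣ g := by
      apply Finset.dvd_gcd
      intro k hk
      rw [Finset.mem_Ioo] at hk
      exact Nat.Prime.dvd_choose_pow hp (by omega) (by omega)
    -- p^2 does not divide C(p^r, p^(r-1))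
    have hmem : p ^ (r - 1) ∈ Finset.Ioo 0 (p ^ r) := by
      rw [Finset.mem_Ioo]
      exact ⟨pow_pos hp.pos _,
        Nat.pow_lt_pow_right hp.one_lt (by omega)⟩
    have hkey : emultiplicity p ((p ^ r).choose (p ^ (r - 1))) = (1 : ℕ) := by
      rw [Nat.Prime.emultiplicity_choose_prime_pow hp
        (le_of_lt (Finset.mem_Ioo.mp hmem).2) (pow_pos hp.pos _).ne']
      rw [multiplicity_pow_self_of_prime hp.prime]
      norm_cast
      omega
    have hnd : ¬ p ^ 2 ∣ (p ^ r).choose (p ^ (r - 1)) := by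
      intro hdvd
      have := pow_dvd_iff_le_emultiplicity.mp hdvd
      rw [hkey] at this
      exact absurd (by exact_mod_cast this) (by norm_num)
    have hgc : g ∣ (p ^ r).choose (p ^ (r - 1)) := Finset.gcd_dvd hmem
    have hnp2 : ¬ p ^ 2 ∣ g := fun h => hnd (h.trans hgc)
    obtain ⟨s, hs, hgs⟩ := (Nat.dvd_prime_pow hp).mp hgd
    rw [hgs] at hpg hnp2 ⊢
    have hs1 : 1 ≤ s := by
      by_contra h
      interval_cases s
      · simpa using hp.one_lt.trans_le (Nat.le_of_dvd one_pos hpg)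
    have hs2 : s < 2 := by
      by_contra h
      exact hnp2 (pow_dvd_pow p (by omega))
    have : s = 1 := by omega
    simp [this]
  · intro hnp
    by_contra hne
    set g := (Finset.Ioo 0 d).gcd (fun k => d.choose k) with hg
    have hgd : g ∣ d := gcd_dvd_d _ hd
    obtain ⟨p, hp, hpg⟩ := Nat.exists_prime_and_dvd hne
    have hd0 : d ≠ 0 := by omega
    have hpd : p ∣ d := hpg.trans hgd
    set a := d.factorization p with ha
    have ha1 : 1 ≤ a := hp.factorization_pos_of_dvd hd0 hpd
    have hpa : p ^ a ∣ d := Nat.ordProj_dvd d p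
    have hsplit : p ^ a * (d / p ^ a) = d := Nat.ordProj_mul_ordCompl_eq_self d p
    set m := d / p ^ a with hm
    have hpm : ¬ p ∣ m := Nat.not_dvd_ordCompl hp hd0
    have hm1 : m ≠ 1 := by
      intro h
      rw [h, mul_one] at hsplit
      exact hnp ⟨p, a, hp, ha1, hsplit.symm⟩
    have hm0 : m ≠ 0 := by
      intro h
      rw [h, mul_zero] at hsplit
      exact hd0 hsplit.symm
    have hm2 : 2 ≤ m := (Nat.two_le_iff m).mpr ⟨hm0, hm1⟩
    have hpalt : p ^ a < d := by
      calc p ^ a = p ^ a * 1 := (mul_one _).symm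
        _ < p ^ a * m := by
            exact Nat.mul_lt_mul_of_le_of_lt le_rfl (by omega) (pow_pos hp.pos _)
        _ = d := hsplit
    have hmem : p ^ a ∈ Finset.Ioo 0 d := by
      rw [Finset.mem_Ioo]
      exact ⟨pow_pos hp.pos _, hpalt⟩
    have hgc : g ∣ d.choose (p ^ a) := Finset.gcd_dvd hmem
    have hpchoose : p ∣ d.choose (p ^ a) := hpg.trans hgc
    -- Lucas' theorem: C(d, p^a) ≡ m (mod p)
    haveI : Fact p.Prime := ⟨hp⟩
    have hlucas := Choose.choose_modEq_choose_mul_prod_range_choose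
      (n := d) (k := p ^ a) (p := p) a
    have hdigits : ∀ i ∈ Finset.range a, p ^ a / p ^ i % p = 0 := by
      intro i hi
      rw [Finset.mem_range] at hi
      rw [Nat.pow_div hi.le hp.pos]
      exact Nat.mod_eq_zero_of_dvd (dvd_pow_self p (by omega))
    have hz := (ZMod.intCast_eq_intCast_iff _ _ _).mpr hlucas
    push_cast at hz
    rw [Nat.div_self (pow_pos hp.pos a)] at hz
    rw [Finset.prod_congr rfl (fun i hi => by rw [hdigits i hi])] at hz
    simp only [Nat.choose_zero_right, Nat.cast_one, Finset.prod_const_one, mul_one,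
      Nat.choose_one_right] at hz
    have h0 : ((d.choose (p ^ a) : ℕ) : ZMod p) = 0 :=
      (ZMod.natCast_eq_zero_iff _ _).mpr hpchoose
    rw [h0] at hz
    exact hpm ((ZMod.natCast_eq_zero_iff _ _).mp hz.symm)
end

section
/- Let k be a field and V a finite dimensional k-vector space with chosen basis. For each d ≥ 0, the multiplication map S^d(V) → Γ^d(V) from the degree d symmetric power to the degree d divided power (the unique algebra map extending the identity on V) has image of dimension equal to the number of monomials x₁^{a₁}···x_n^{a_n} of total degree d in which every exponent a_i is strictly less than p, when k has characteristic p > 0. -/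
open scoped TensorProduct

variable (k : Type*) [Field k]

/-- The action of a permutation `σ` on the `d`-th tensor power of `V`, permuting the factors. -/
noncomputable def permTensor (V : Type*) [AddCommGroup V] [Module k V] (d : ℕ)
    (σ : Equiv.Perm (Fin d)) :
    (⨂[k] (_ : Fin d), V) →ₗ[k] (⨂[k] (_ : Fin d), V) :=
  (PiTensorProduct.reindex k (fun _ : Fin d => V) σ).toLinearMap

/-- The total symmetrization operator `N = Σ_{σ ∈ Σ_d} σ` on `V^{⊗d}`.  The multiplication map
`φ : S^d(V) → Γ^d(V)` of the divided power algebra (the unique algebra map extending the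
identity of `V`) sends the class of `x₁⋯x_d` to `Σ_σ x_{σ(1)}⊗⋯⊗x_{σ(d)}`, so the image of
`φ` in degree `d` is exactly the image of `N`. -/
noncomputable def symmetrization (V : Type*) [AddCommGroup V] [Module k V] (d : ℕ) :
    (⨂[k] (_ : Fin d), V) →ₗ[k] (⨂[k] (_ : Fin d), V) :=
  ∑ σ : Equiv.Perm (Fin d), permTensor k V d σ

section AuxSymm
open Finset

section

variable (k : Type*) [Field k] {n d : ℕ}

/-- basis vector of the tensor power indexed by `f : Fin d → Fin n`. -/
noncomputable def bv (f : Fin d → Fin n) : ⨂[k] (_ : Fin d), (Fin n → k) :=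
  PiTensorProduct.tprod k (fun j => Pi.single (f j) (1 : k))

/-- coordinate functional at `g`. -/
noncomputable def coordF (g : Fin d → Fin n) : (⨂[k] (_ : Fin d), (Fin n → k)) →ₗ[k] k :=
  PiTensorProduct.lift ((MultilinearMap.mkPiAlgebra k (Fin d) k).compLinearMap
    (fun j => LinearMap.proj (g j)))

lemma coordF_bv (f g : Fin d → Fin n) :
    coordF k g (bv k f) = if f = g then 1 else 0 := by
  rw [coordF, bv, PiTensorProduct.lift.tprod]
  simp only [MultilinearMap.compLinearMap_apply, MultilinearMap.mkPiAlgebra_apply,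
    LinearMap.proj_apply]
  have : ∀ j : Fin d, (Pi.single (f j) (1:k) : Fin n → k) (g j) = ((if f j = g j then 1 else 0) : k) := by
    intro j; rw [Pi.single_apply]; simp [eq_comm]
  rw [Finset.prod_congr rfl fun j _ => this j]
  by_cases h : f = g
  · subst h; simp
  · rw [if_neg h]
    obtain ⟨j, hj⟩ := Function.ne_iff.mp h
    exact Finset.prod_eq_zero (Finset.mem_univ j) (if_neg hj)

/-- number of `j` with `f j = i`. -/
def cnt (f : Fin d → Fin n) : Fin n → ℕ := fun i => #{j : Fin d | f j = i}

lemma cnt_eq_card_subtype (f : Fin d → Fin n) (i : Fin n) :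
    cnt f i = Fintype.card {j // f j = i} := (Fintype.card_subtype _).symm

lemma sum_cnt (f : Fin d → Fin n) : ∑ i, cnt f i = d := by
  have := Finset.card_eq_sum_card_fiberwise
    (f := f) (s := Finset.univ) (t := Finset.univ) (fun j _ => Finset.mem_univ _)
  simpa [cnt] using this.symm

lemma cnt_comp (f : Fin d → Fin n) (σ : Equiv.Perm (Fin d)) : cnt (f ∘ σ) = cnt f := by
  funext i
  rw [cnt_eq_card_subtype, cnt_eq_card_subtype]
  exact Fintype.card_congr (σ.subtypeEquiv (fun j => Iff.rfl))

end

section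
variable {n d : ℕ}

/-- Permutations carrying `g` to `f` correspond to families of bijections between fibers. -/
noncomputable def fiberEquiv (f g : Fin d → Fin n) :
    {σ : Equiv.Perm (Fin d) // f ∘ ⇑σ = g} ≃ (∀ i, {j // g j = i} ≃ {j // f j = i}) where
  toFun σ i := σ.1.subtypeEquiv (fun j => by
    rw [show f (σ.1 j) = g j from congrFun σ.2 j])
  invFun π := ⟨(Equiv.sigmaFiberEquiv g).symm.trans
      ((Equiv.sigmaCongrRight π).trans (Equiv.sigmaFiberEquiv f)),
    by funext j; exact (π (g j) ⟨j, rfl⟩).2⟩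
  left_inv σ := by
    apply Subtype.ext; apply Equiv.ext; intro j; rfl
  right_inv π := by
    funext i; apply Equiv.ext; intro x
    obtain ⟨j, hj⟩ := x
    subst hj
    rfl

lemma card_fiber_eq (f g : Fin d → Fin n) (h : cnt f = cnt g) :
    Fintype.card {σ : Equiv.Perm (Fin d) // f ∘ ⇑σ = g} = ∏ i, Nat.factorial (cnt f i) := by
  rw [Fintype.card_congr (fiberEquiv f g), Fintype.card_pi]
  refine Finset.prod_congr rfl fun i _ => ?_
  have hc : Fintype.card {j // g j = i} = Fintype.card {j // f j = i} := by
    rw [← cnt_eq_card_subtype, ← cnt_eq_card_subtype, h]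
  rw [Fintype.card_equiv (Fintype.equivOfCardEq hc), ← cnt_eq_card_subtype, ← h]

lemma card_fiber_ne (f g : Fin d → Fin n) (h : cnt f ≠ cnt g) :
    Fintype.card {σ : Equiv.Perm (Fin d) // f ∘ ⇑σ = g} = 0 := by
  rw [Fintype.card_eq_zero_iff]
  exact ⟨fun σ => h (by rw [← σ.2, cnt_comp])⟩

lemma exists_cnt (a : Fin n → ℕ) (h : ∑ i, a i = d) : ∃ f : Fin d → Fin n, cnt f = a := by
  have hcard : Fintype.card (Σ i : Fin n, Fin (a i)) = Fintype.card (Fin d) := by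
    simp [Fintype.card_sigma, h]
  let e := Fintype.equivOfCardEq hcard
  refine ⟨fun j => (e.symm j).1, funext fun i => ?_⟩
  rw [cnt_eq_card_subtype]
  have e2 : {j : Fin d // (e.symm j).1 = i} ≃ {x : Σ i' : Fin n, Fin (a i') // x.1 = i} :=
    e.symm.subtypeEquiv (fun j => Iff.rfl)
  have e3 : {x : Σ i' : Fin n, Fin (a i') // x.1 = i} ≃ Fin (a i) :=
    { toFun := fun x => x.2 ▸ x.1.2
      invFun := fun b => ⟨⟨i, b⟩, rfl⟩
      left_inv := by rintro ⟨⟨j, b⟩, rfl⟩; rfl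
      right_inv := fun b => rfl }
  rw [Fintype.card_congr (e2.trans e3), Fintype.card_fin]

end

section
variable (k : Type*) [Field k] {n d : ℕ}

/-- sum of all basis vectors with content `a`. -/
noncomputable def mvec (a : Fin n → ℕ) : ⨂[k] (_ : Fin d), (Fin n → k) :=
  ∑ g ∈ ({g : Fin d → Fin n | cnt g = a} : Finset _), bv k g

lemma permTensor_bv (σ : Equiv.Perm (Fin d)) (f : Fin d → Fin n) :
    permTensor k (Fin n → k) d σ (bv k f) = bv k (f ∘ ⇑σ.symm) := by
  rw [permTensor, bv, LinearEquiv.coe_coe, PiTensorProduct.reindex_tprod]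
  rfl

lemma symm_bv (f : Fin d → Fin n) :
    symmetrization k (Fin n → k) d (bv k f) =
      ((∏ i, Nat.factorial (cnt f i) : ℕ) : k) • mvec k (cnt f) := by
  rw [symmetrization, LinearMap.sum_apply]
  have h1 : ∀ σ : Equiv.Perm (Fin d), permTensor k (Fin n → k) d σ (bv k f)
      = bv k (f ∘ ⇑σ.symm) := fun σ => permTensor_bv k σ f
  rw [Finset.sum_congr rfl fun σ _ => h1 σ]
  have h2 : ∑ σ : Equiv.Perm (Fin d), bv k (f ∘ ⇑σ.symm)
      = ∑ σ : Equiv.Perm (Fin d), bv k (f ∘ ⇑σ) := by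
    exact Fintype.sum_equiv (Equiv.inv (Equiv.Perm (Fin d)))
      (fun σ => bv k (f ∘ ⇑σ.symm)) (fun σ => bv k (f ∘ ⇑σ)) (fun σ => rfl)
  rw [h2]
  have h3 : ∑ σ : Equiv.Perm (Fin d), bv k (f ∘ ⇑σ)
      = ∑ g : Fin d → Fin n, ∑ σ ∈ ({σ : Equiv.Perm (Fin d) | f ∘ ⇑σ = g} : Finset _), bv k g := by
    rw [Finset.sum_fiberwise' Finset.univ (fun σ : Equiv.Perm (Fin d) => f ∘ ⇑σ) (fun g => bv k g)]
  rw [h3]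
  have h4 : ∀ g : Fin d → Fin n,
      ∑ σ ∈ ({σ : Equiv.Perm (Fin d) | f ∘ ⇑σ = g} : Finset _), bv k g
      = (((if cnt g = cnt f then (∏ i, Nat.factorial (cnt f i)) else 0) : ℕ) : k) • bv k g := by
    intro g
    have hcard : #(Finset.univ.filter (fun σ : Equiv.Perm (Fin d) => f ∘ ⇑σ = g))
        = (if cnt g = cnt f then (∏ i, Nat.factorial (cnt f i)) else 0) := by
      rw [← Fintype.card_subtype]
      by_cases h : cnt g = cnt f
      · rw [if_pos h, card_fiber_eq f g h.symm]
      · rw [if_neg h, card_fiber_ne f g (Ne.symm h)]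
    rw [Finset.sum_const, hcard, ← Nat.cast_smul_eq_nsmul k]
  rw [Finset.sum_congr rfl fun g _ => h4 g]
  rw [mvec, Finset.smul_sum, Finset.sum_filter]
  refine Finset.sum_congr rfl fun g _ => ?_
  by_cases h : cnt g = cnt f <;> simp [h]

end

section
variable (k : Type*) [Field k] {n d : ℕ}

lemma mem_span_bv (v : Fin d → (Fin n → k)) :
    PiTensorProduct.tprod k v ∈ Submodule.span k (Set.range (bv k (n := n) (d := d))) := by
  have hv : v = fun j => ∑ i, v j i • (Pi.single i (1:k) : Fin n → k) := by
    funext j x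
    simp [Pi.single_apply]
  rw [hv, MultilinearMap.map_sum]
  refine Submodule.sum_mem _ fun r _ => ?_
  rw [MultilinearMap.map_smul_univ]
  exact Submodule.smul_mem _ _ (Submodule.subset_span ⟨r, rfl⟩)

lemma span_bv : Submodule.span k (Set.range (bv k (n := n) (d := d))) = ⊤ := by
  rw [eq_top_iff, ← PiTensorProduct.span_tprod_eq_top, Submodule.span_le]
  rintro x ⟨v, rfl⟩
  exact mem_span_bv k v

lemma coordF_mvec (f₀ : Fin d → Fin n) (a : Fin n → ℕ) :
    coordF k f₀ (mvec k a) = if cnt f₀ = a then 1 else 0 := by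
  rw [mvec, map_sum, Finset.sum_congr rfl fun g _ => coordF_bv k g f₀,
    Finset.sum_ite_eq' _ f₀ (fun _ => (1:k))]
  simp [Finset.mem_filter]


end

end AuxSymm

/-- Let `k` be a field of characteristic `p > 0` and `V = k^n` (a finite
dimensional vector space with chosen basis).  The image of the multiplication map
`S^d(V) → Γ^d(V)` — i.e. the image of the total symmetrization operator on `V^{⊗d}` — has
dimension equal to the number of monomials `x₁^{a₁}⋯x_n^{a_n}` of total degree `d` with all
exponents `aᵢ < p`, when `k` has characteristic `p > 0`. -/
theorem rank_symmetrization (p : ℕ) [CharP k p] (hp : p.Prime) (n d : ℕ) :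
    Module.finrank k (LinearMap.range (symmetrization k (Fin n → k) d)) =
      Nat.card {a : Fin n → ℕ // (∀ i, a i < p) ∧ (∑ i, a i) = d} := by
  classical
  have hinj : Function.Injective
      (fun (a : {a : Fin n → ℕ // (∀ i, a i < p) ∧ (∑ i, a i) = d}) =>
        (fun i => (⟨a.1 i, by
          have h1 := Finset.single_le_sum (f := a.1) (fun i _ => Nat.zero_le _)
            (Finset.mem_univ i)
          have h2 := a.2.2
          omega⟩ : Fin (d+1)))) := by
    intro a b hab
    apply Subtype.ext; funext i
    exact congrArg Fin.val (congrFun hab i)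
  letI : Fintype {a : Fin n → ℕ // (∀ i, a i < p) ∧ (∑ i, a i) = d} :=
    Fintype.ofInjective _ hinj
  have hKne : ∀ a : {a : Fin n → ℕ // (∀ i, a i < p) ∧ (∑ i, a i) = d},
      ((∏ i, Nat.factorial (a.1 i) : ℕ) : k) ≠ 0 := by
    intro a
    rw [Ne, CharP.cast_eq_zero_iff k p]
    intro hdvd
    obtain ⟨i, -, hi⟩ := (Nat.Prime.prime hp).exists_mem_finset_dvd hdvd
    exact absurd (a.2.1 i) (not_lt.mpr (hp.dvd_factorial.mp hi))
  have hrange : LinearMap.range (symmetrization k (Fin n → k) d)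
      = Submodule.span k (Set.range
        (fun (a : {a : Fin n → ℕ // (∀ i, a i < p) ∧ (∑ i, a i) = d}) =>
          mvec k (n := n) (d := d) a.1)) := by
    rw [LinearMap.range_eq_map, ← span_bv k (n := n) (d := d), Submodule.map_span,
      ← Set.range_comp]
    apply le_antisymm
    · rw [Submodule.span_le]
      rintro x ⟨f, rfl⟩
      simp only [Function.comp_apply]
      rw [symm_bv]
      by_cases hf : ∀ i, cnt f i < p
      · exact Submodule.smul_mem _ _
          (Submodule.subset_span ⟨⟨cnt f, hf, sum_cnt f⟩, rfl⟩)
      · push_neg at hf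
        obtain ⟨i, hi⟩ := hf
        have hz : ((∏ i, Nat.factorial (cnt f i) : ℕ) : k) = 0 := by
          rw [CharP.cast_eq_zero_iff k p]
          exact dvd_trans (hp.dvd_factorial.mpr hi)
            (Finset.dvd_prod_of_mem _ (Finset.mem_univ i))
        rw [hz, zero_smul]
        exact Submodule.zero_mem _
    · rw [Submodule.span_le]
      rintro x ⟨a, rfl⟩
      simp only [SetLike.mem_coe]
      show mvec k a.1 ∈ _
      obtain ⟨f, hf⟩ := exists_cnt a.1 a.2.2
      have h1 : symmetrization k (Fin n → k) d (bv k f)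
          = ((∏ i, Nat.factorial (a.1 i) : ℕ) : k) • mvec k a.1 := by
        rw [symm_bv, hf]
      have h2 : mvec k a.1 = ((∏ i, Nat.factorial (a.1 i) : ℕ) : k)⁻¹ •
          (symmetrization k (Fin n → k) d (bv k f)) := by
        rw [h1, smul_smul, inv_mul_cancel₀ (hKne a), one_smul]
      rw [h2]
      exact Submodule.smul_mem _ _ (Submodule.subset_span ⟨f, rfl⟩)
  have hli : LinearIndependent k
      (fun (a : {a : Fin n → ℕ // (∀ i, a i < p) ∧ (∑ i, a i) = d}) =>
        mvec k (n := n) (d := d) a.1) := by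
    rw [Fintype.linearIndependent_iff]
    intro c hc a₀
    obtain ⟨f₀, hf₀⟩ := exists_cnt a₀.1 a₀.2.2
    have hthis := congrArg (coordF k f₀) hc
    rw [map_sum, map_zero] at hthis
    simp only [map_smul, coordF_mvec, hf₀, smul_eq_mul, mul_ite, mul_one, mul_zero] at hthis
    rw [Finset.sum_eq_single a₀ (fun b _ hb => if_neg (fun h => hb (Subtype.ext h.symm)))
      (fun h => absurd (Finset.mem_univ a₀) h), if_pos rfl] at hthis
    exact hthis
  rw [hrange, finrank_span_eq_card hli, Nat.card_eq_fintype_card]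
end

section
/- Let R be a commutative ring and M, N two R-modules. The multiplication of the divided power algebra induces an isomorphism of R-algebras Γ_R(M) ⊗_R Γ_R(N) ≅ Γ_R(M ⊕ N). -/
set_option synthInstance.maxHeartbeats 1000000
set_option maxHeartbeats 4000000


open MvPolynomial
open scoped TensorProduct

variable (R : Type*) [CommRing R]

/-- The set of defining relations of the divided power algebra `Γ_R(M)`. -/
def dpRelations (M : Type*) [AddCommGroup M] [Module R M] : Set (MvPolynomial (ℕ × M) R) :=
  {q | (∃ x : M, q = X (0, x) - 1) ∨
       (∃ s t : ℕ, ∃ x : M,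
          q = X (s, x) * X (t, x) - (((s + t).choose s : MvPolynomial (ℕ × M) R)) * X (s + t, x)) ∨
       (∃ n : ℕ, ∃ x y : M, 1 ≤ n ∧
          q = X (n, x + y) - ∑ s ∈ Finset.range (n + 1), X (s, x) * X (n - s, y)) ∨
       (∃ n : ℕ, ∃ c : R, ∃ x : M, 1 ≤ n ∧
          q = X (n, c • x) - C (c ^ n) * X (n, x))}

/-- The divided power algebra `Γ_R(M)`, presented by generators `γ_n(x)` and relations. -/
def DPAlgebra (M : Type*) [AddCommGroup M] [Module R M] : Type _ :=
  MvPolynomial (ℕ × M) R ⧸ Ideal.span (dpRelations R M)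

noncomputable instance (M : Type*) [AddCommGroup M] [Module R M] :
    CommRing (DPAlgebra R M) :=
  inferInstanceAs (CommRing (MvPolynomial (ℕ × M) R ⧸ Ideal.span (dpRelations R M)))

noncomputable instance (M : Type*) [AddCommGroup M] [Module R M] :
    Algebra R (DPAlgebra R M) :=
  inferInstanceAs (Algebra R (MvPolynomial (ℕ × M) R ⧸ Ideal.span (dpRelations R M)))

/-- The divided power `γ_n(x)` in `Γ_R(M)`. -/
noncomputable def dpGamma (M : Type*) [AddCommGroup M] [Module R M] (n : ℕ) (x : M) :
    DPAlgebra R M :=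
  Ideal.Quotient.mk (Ideal.span (dpRelations R M)) (X (n, x))

/-! ### Basic lemmas about `dpGamma` -/

section Basic
variable {M : Type*} [AddCommGroup M] [Module R M]

lemma dp_mk_rel {q : MvPolynomial (ℕ × M) R} (hq : q ∈ dpRelations R M) :
    Ideal.Quotient.mk (Ideal.span (dpRelations R M)) q = 0 :=
  Ideal.Quotient.eq_zero_iff_mem.mpr (Ideal.subset_span hq)

lemma dpGamma_zero (x : M) : dpGamma R M 0 x = 1 := by
  have := dp_mk_rel R (q := X (0, x) - 1) (Or.inl ⟨x, rfl⟩)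
  rw [map_sub, sub_eq_zero, map_one] at this
  exact this

lemma dpGamma_mul (s t : ℕ) (x : M) :
    dpGamma R M s x * dpGamma R M t x =
      ((s + t).choose s : DPAlgebra R M) * dpGamma R M (s + t) x := by
  have := dp_mk_rel R (q := X (s, x) * X (t, x) -
    (((s + t).choose s : MvPolynomial (ℕ × M) R)) * X (s + t, x))
    (Or.inr (Or.inl ⟨s, t, x, rfl⟩))
  rw [map_sub, sub_eq_zero, map_mul, map_mul, map_natCast] at this
  exact this

lemma dpGamma_add (n : ℕ) (x y : M) :
    dpGamma R M n (x + y) =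
      ∑ s ∈ Finset.range (n + 1), dpGamma R M s x * dpGamma R M (n - s) y := by
  rcases Nat.eq_zero_or_pos n with rfl | hn
  · simp [dpGamma_zero]
  · have := dp_mk_rel R (q := X (n, x + y) -
      ∑ s ∈ Finset.range (n + 1), X (s, x) * X (n - s, y))
      (Or.inr (Or.inr (Or.inl ⟨n, x, y, hn, rfl⟩)))
    rw [map_sub, sub_eq_zero, map_sum] at this
    simp only [map_mul] at this
    exact this

lemma dpGamma_smul (n : ℕ) (c : R) (x : M) :
    dpGamma R M n (c • x) = algebraMap R _ (c ^ n) * dpGamma R M n x := by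
  rcases Nat.eq_zero_or_pos n with rfl | hn
  · simp [dpGamma_zero]
  · have := dp_mk_rel R (q := X (n, c • x) - C (c ^ n) * X (n, x))
      (Or.inr (Or.inr (Or.inr ⟨n, c, x, hn, rfl⟩)))
    rw [map_sub, sub_eq_zero, map_mul] at this
    rw [← MvPolynomial.algebraMap_eq, Ideal.Quotient.mk_algebraMap] at this
    exact this

lemma dpGamma_zero_arg (n : ℕ) (hn : 1 ≤ n) : dpGamma R M n 0 = 0 := by
  have := dpGamma_smul R n (0 : R) (0 : M)
  rw [smul_zero, zero_pow (by omega), map_zero, zero_mul] at this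
  exact this

lemma dpGamma_add' (n : ℕ) (x y : M) :
    dpGamma R M n (x + y) =
      ∑ ab ∈ Finset.HasAntidiagonal.antidiagonal n, dpGamma R M ab.1 x * dpGamma R M ab.2 y := by
  rw [dpGamma_add, Finset.Nat.sum_antidiagonal_eq_sum_range_succ_mk]

end Basic

/-! ### Convolution lemmas -/

section Conv
variable {A : Type*} [CommRing A]

private noncomputable def truncPoly (f : ℕ → A) (n : ℕ) : Polynomial A :=
  ∑ i ∈ Finset.range (n + 1), Polynomial.C (f i) * Polynomial.X ^ i

private lemma truncPoly_coeff (f : ℕ → A) (n a : ℕ) (h : a ≤ n) :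
    (truncPoly f n).coeff a = f a := by
  rw [truncPoly, Polynomial.finset_sum_coeff]
  rw [Finset.sum_eq_single a]
  · simp
  · intro b _ hb; simp [Polynomial.coeff_C_mul, Polynomial.coeff_X_pow, Ne.symm hb]
  · intro hb; exact absurd (Finset.mem_range.mpr (by omega)) hb

private lemma truncPoly_mul_coeff (f g : ℕ → A) (n k : ℕ) (h : k ≤ n) :
    (truncPoly f n * truncPoly g n).coeff k =
      ∑ ab ∈ Finset.HasAntidiagonal.antidiagonal k, f ab.1 * g ab.2 := by
  rw [Polynomial.coeff_mul]
  refine Finset.sum_congr rfl fun ab hab => ?_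
  rw [Finset.HasAntidiagonal.mem_antidiagonal] at hab
  rw [truncPoly_coeff f n _ (by omega), truncPoly_coeff g n _ (by omega)]

private lemma conv4 (p p' q q' : ℕ → A) (n : ℕ) :
    ∑ kl ∈ Finset.HasAntidiagonal.antidiagonal n,
      (∑ ab ∈ Finset.HasAntidiagonal.antidiagonal kl.1, p ab.1 * p' ab.2) *
      (∑ cd ∈ Finset.HasAntidiagonal.antidiagonal kl.2, q cd.1 * q' cd.2) =
    ∑ kl ∈ Finset.HasAntidiagonal.antidiagonal n,
      (∑ ab ∈ Finset.HasAntidiagonal.antidiagonal kl.1, p ab.1 * q ab.2) *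
      (∑ cd ∈ Finset.HasAntidiagonal.antidiagonal kl.2, p' cd.1 * q' cd.2) := by
  have h1 : ∑ kl ∈ Finset.HasAntidiagonal.antidiagonal n,
      (∑ ab ∈ Finset.HasAntidiagonal.antidiagonal kl.1, p ab.1 * p' ab.2) *
      (∑ cd ∈ Finset.HasAntidiagonal.antidiagonal kl.2, q cd.1 * q' cd.2) =
      ((truncPoly p n * truncPoly p' n) * (truncPoly q n * truncPoly q' n)).coeff n := by
    rw [Polynomial.coeff_mul]
    refine Finset.sum_congr rfl fun kl hkl => ?_
    rw [Finset.HasAntidiagonal.mem_antidiagonal] at hkl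
    rw [truncPoly_mul_coeff _ _ _ _ (by omega), truncPoly_mul_coeff _ _ _ _ (by omega)]
  have h2 : ∑ kl ∈ Finset.HasAntidiagonal.antidiagonal n,
      (∑ ab ∈ Finset.HasAntidiagonal.antidiagonal kl.1, p ab.1 * q ab.2) *
      (∑ cd ∈ Finset.HasAntidiagonal.antidiagonal kl.2, p' cd.1 * q' cd.2) =
      ((truncPoly p n * truncPoly q n) * (truncPoly p' n * truncPoly q' n)).coeff n := by
    rw [Polynomial.coeff_mul]
    refine Finset.sum_congr rfl fun kl hkl => ?_
    rw [Finset.HasAntidiagonal.mem_antidiagonal] at hkl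
    rw [truncPoly_mul_coeff _ _ _ _ (by omega), truncPoly_mul_coeff _ _ _ _ (by omega)]
  rw [h1, h2]; ring_nf

private lemma conv_mul (p q : ℕ → A)
    (hp : ∀ a c : ℕ, p a * p c = ((a + c).choose a : A) * p (a + c))
    (hq : ∀ b d : ℕ, q b * q d = ((b + d).choose b : A) * q (b + d)) (s t : ℕ) :
    (∑ ab ∈ Finset.HasAntidiagonal.antidiagonal s, p ab.1 * q ab.2) *
      (∑ cd ∈ Finset.HasAntidiagonal.antidiagonal t, p cd.1 * q cd.2) =
    ((s + t).choose s : A) * ∑ kl ∈ Finset.HasAntidiagonal.antidiagonal (s + t), p kl.1 * q kl.2 := by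
  rw [Finset.sum_mul_sum]
  have key : ∀ ab ∈ Finset.HasAntidiagonal.antidiagonal s,
      ∑ cd ∈ Finset.HasAntidiagonal.antidiagonal t, (p ab.1 * q ab.2) * (p cd.1 * q cd.2) =
      ∑ k ∈ Finset.range (s + t + 1),
        ((k.choose ab.1 : A) * ((s + t - k).choose ab.2 : A)) * (p k * q (s + t - k)) := by
    rintro ⟨a, b⟩ hab
    rw [Finset.HasAntidiagonal.mem_antidiagonal] at hab
    rw [Finset.Nat.sum_antidiagonal_eq_sum_range_succ_mk]
    have hsub : Finset.Ico a (a + t + 1) ⊆ Finset.range (s + t + 1) := by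
      intro k hk; rw [Finset.mem_Ico] at hk; rw [Finset.mem_range]; omega
    rw [← Finset.sum_subset hsub ?_]
    · rw [Finset.sum_Ico_eq_sum_range]
      have : a + t + 1 - a = t + 1 := by omega
      rw [this]
      refine Finset.sum_congr rfl fun c hc => ?_
      rw [Finset.mem_range] at hc
      have h1 : s + t - (a + c) = b + (t - c) := by omega
      dsimp only
      rw [h1, mul_mul_mul_comm, hp, hq]
      ring
    · intro k hk hk2
      rw [Finset.mem_range] at hk
      rw [Finset.mem_Ico] at hk2
      rcases lt_or_ge k a with h | h
      · rw [Nat.choose_eq_zero_of_lt h]; push_cast; ring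
      · have : s + t - k < b := by omega
        rw [Nat.choose_eq_zero_of_lt this]; push_cast; ring
  rw [Finset.sum_congr rfl key, Finset.sum_comm]
  rw [Finset.mul_sum, Finset.Nat.sum_antidiagonal_eq_sum_range_succ_mk]
  refine Finset.sum_congr rfl fun k hk => ?_
  rw [Finset.mem_range] at hk
  rw [← Finset.sum_mul]
  congr 1
  have hkk : k + (s + t - k) = s + t := by omega
  have hv : (s + t).choose s =
      ∑ ab ∈ Finset.HasAntidiagonal.antidiagonal s, k.choose ab.1 * (s + t - k).choose ab.2 := by
    conv_lhs => rw [← hkk]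
    exact Nat.add_choose_eq _ _ _
  rw [hv]
  push_cast
  rfl

end Conv

/-! ### The map Φ and its properties -/

section Phi
variable {M N : Type*} [AddCommGroup M] [Module R M] [AddCommGroup N] [Module R N]

noncomputable def dpPhi (n : ℕ) (x : M) (y : N) : DPAlgebra R M ⊗[R] DPAlgebra R N :=
  ∑ ab ∈ Finset.HasAntidiagonal.antidiagonal n, dpGamma R M ab.1 x ⊗ₜ[R] dpGamma R N ab.2 y

lemma dpPhi_eq (n : ℕ) (x : M) (y : N) :
    dpPhi R n x y = ∑ ab ∈ Finset.HasAntidiagonal.antidiagonal n,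
      (dpGamma R M ab.1 x ⊗ₜ[R] (1 : DPAlgebra R N)) *
      ((1 : DPAlgebra R M) ⊗ₜ[R] dpGamma R N ab.2 y) := by
  simp [dpPhi, Algebra.TensorProduct.tmul_mul_tmul]

lemma dp_p_mul (x : M) (a c : ℕ) :
    (dpGamma R M a x ⊗ₜ[R] (1 : DPAlgebra R N)) * (dpGamma R M c x ⊗ₜ[R] 1) =
      (((a + c).choose a : ℕ) : DPAlgebra R M ⊗[R] DPAlgebra R N) *
        (dpGamma R M (a + c) x ⊗ₜ[R] 1) := by
  rw [Algebra.TensorProduct.tmul_mul_tmul, one_mul, dpGamma_mul]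
  rw [← nsmul_eq_mul, ← nsmul_eq_mul, TensorProduct.smul_tmul']

lemma dp_q_mul (y : N) (b d : ℕ) :
    ((1 : DPAlgebra R M) ⊗ₜ[R] dpGamma R N b y) * ((1 : DPAlgebra R M) ⊗ₜ[R] dpGamma R N d y) =
      (((b + d).choose b : ℕ) : DPAlgebra R M ⊗[R] DPAlgebra R N) *
        ((1 : DPAlgebra R M) ⊗ₜ[R] dpGamma R N (b + d) y) := by
  rw [Algebra.TensorProduct.tmul_mul_tmul, one_mul, dpGamma_mul]
  rw [← nsmul_eq_mul, ← nsmul_eq_mul, TensorProduct.tmul_smul]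

lemma dpPhi_zero (x : M) (y : N) : dpPhi R 0 x y = 1 := by
  simp [dpPhi, dpGamma_zero, Algebra.TensorProduct.one_def]

lemma dpPhi_mul (s t : ℕ) (x : M) (y : N) :
    dpPhi R s x y * dpPhi R t x y =
      (((s + t).choose s : ℕ) : DPAlgebra R M ⊗[R] DPAlgebra R N) * dpPhi R (s + t) x y := by
  rw [dpPhi_eq, dpPhi_eq, dpPhi_eq]
  exact conv_mul _ _ (dp_p_mul R x) (dp_q_mul R y) s t

lemma tmul_factor (u : DPAlgebra R M) (v : DPAlgebra R N) :
    u ⊗ₜ[R] v = (u ⊗ₜ[R] (1 : DPAlgebra R N)) * ((1 : DPAlgebra R M) ⊗ₜ[R] v) := by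
  rw [Algebra.TensorProduct.tmul_mul_tmul, mul_one, one_mul]

lemma dpPhi_add (n : ℕ) (x x' : M) (y y' : N) :
    dpPhi R n (x + x') (y + y') =
      ∑ st ∈ Finset.HasAntidiagonal.antidiagonal n, dpPhi R st.1 x y * dpPhi R st.2 x' y' := by
  have lhs : dpPhi R n (x + x') (y + y') =
      ∑ kl ∈ Finset.HasAntidiagonal.antidiagonal n,
        (∑ ab ∈ Finset.HasAntidiagonal.antidiagonal kl.1,
          (dpGamma R M ab.1 x ⊗ₜ[R] (1 : DPAlgebra R N)) *
          (dpGamma R M ab.2 x' ⊗ₜ[R] (1 : DPAlgebra R N))) *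
        (∑ cd ∈ Finset.HasAntidiagonal.antidiagonal kl.2,
          ((1 : DPAlgebra R M) ⊗ₜ[R] dpGamma R N cd.1 y) *
          ((1 : DPAlgebra R M) ⊗ₜ[R] dpGamma R N cd.2 y')) := by
    rw [dpPhi]
    refine Finset.sum_congr rfl fun kl _ => ?_
    rw [tmul_factor, dpGamma_add', dpGamma_add', TensorProduct.sum_tmul,
      TensorProduct.tmul_sum]
    congr 1
    · refine Finset.sum_congr rfl fun ab _ => ?_
      rw [Algebra.TensorProduct.tmul_mul_tmul, mul_one]
    · refine Finset.sum_congr rfl fun cd _ => ?_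
      rw [Algebra.TensorProduct.tmul_mul_tmul, mul_one]
  rw [lhs, conv4 (fun a => dpGamma R M a x ⊗ₜ[R] (1 : DPAlgebra R N))
    (fun a => dpGamma R M a x' ⊗ₜ[R] (1 : DPAlgebra R N))
    (fun b => (1 : DPAlgebra R M) ⊗ₜ[R] dpGamma R N b y)
    (fun b => (1 : DPAlgebra R M) ⊗ₜ[R] dpGamma R N b y') n]
  exact Finset.sum_congr rfl fun st _ => by rw [dpPhi_eq, dpPhi_eq]

lemma dpPhi_smul (n : ℕ) (c : R) (x : M) (y : N) :
    dpPhi R n (c • x) (c • y) =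
      algebraMap R (DPAlgebra R M ⊗[R] DPAlgebra R N) (c ^ n) * dpPhi R n x y := by
  rw [dpPhi, dpPhi, Finset.mul_sum]
  refine Finset.sum_congr rfl fun ab hab => ?_
  rw [Finset.HasAntidiagonal.mem_antidiagonal] at hab
  rw [dpGamma_smul, dpGamma_smul, ← Algebra.smul_def, ← Algebra.smul_def,
    ← TensorProduct.smul_tmul', TensorProduct.tmul_smul, smul_smul, ← pow_add, hab,
    Algebra.smul_def]

lemma dpPhi_right_zero (n : ℕ) (x : M) :
    dpPhi R n x (0 : N) = dpGamma R M n x ⊗ₜ[R] 1 := by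
  rw [dpPhi, Finset.sum_eq_single_of_mem (n, 0) (by simp)]
  · rw [dpGamma_zero]
  · rintro ⟨a, b⟩ hab hne
    rw [Finset.HasAntidiagonal.mem_antidiagonal] at hab
    have hb : 1 ≤ b := by
      rcases Nat.eq_zero_or_pos b with rfl | h
      · exact absurd (by simpa using hab) (by simpa using hne)
      · exact h
    rw [dpGamma_zero_arg R b hb, TensorProduct.tmul_zero]

lemma dpPhi_left_zero (n : ℕ) (y : N) :
    dpPhi R n (0 : M) y = (1 : DPAlgebra R M) ⊗ₜ[R] dpGamma R N n y := by
  rw [dpPhi, Finset.sum_eq_single_of_mem (0, n) (by simp)]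
  · rw [dpGamma_zero]
  · rintro ⟨a, b⟩ hab hne
    rw [Finset.HasAntidiagonal.mem_antidiagonal] at hab
    have ha : 1 ≤ a := by
      rcases Nat.eq_zero_or_pos a with rfl | h
      · exact absurd (by simpa using hab) (by simpa using hne)
      · exact h
    rw [dpGamma_zero_arg R a ha, TensorProduct.zero_tmul]

end Phi

/-! ### Functorial maps -/

section Maps
variable {M N : Type*} [AddCommGroup M] [Module R M] [AddCommGroup N] [Module R N]

private lemma dpMap_wd (f : M →ₗ[R] N) :
    ∀ a ∈ Ideal.span (dpRelations R M),
      aeval (fun p : ℕ × M => dpGamma R N p.1 (f p.2)) a = 0 := by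
      suffices h : Ideal.span (dpRelations R M) ≤
          RingHom.ker (aeval (R := R) fun p : ℕ × M => dpGamma R N p.1 (f p.2)) from
        fun a ha => h ha
      rw [Ideal.span_le]
      rintro q (⟨x, rfl⟩ | ⟨s, t, x, rfl⟩ | ⟨n, x, y, hn, rfl⟩ | ⟨n, c, x, hn, rfl⟩) <;>
        simp only [SetLike.mem_coe, RingHom.mem_ker, map_sub, map_mul, map_sum, map_one,
          map_natCast, aeval_X, sub_eq_zero, algebraMap_eq, aeval_C]
      · rw [dpGamma_zero]
      · rw [dpGamma_mul]
      · rw [map_add, dpGamma_add]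
      · rw [map_smul, dpGamma_smul]

noncomputable def dpMap (f : M →ₗ[R] N) : DPAlgebra R M →ₐ[R] DPAlgebra R N :=
  Ideal.Quotient.liftₐ (Ideal.span (dpRelations R M))
    (aeval fun p => dpGamma R N p.1 (f p.2)) (dpMap_wd R f)

lemma dpMap_gamma (f : M →ₗ[R] N) (n : ℕ) (x : M) :
    dpMap R f (dpGamma R M n x) = dpGamma R N n (f x) := by
  have h := AlgHom.congr_fun (Ideal.Quotient.liftₐ_comp (Ideal.span (dpRelations R M))
    (aeval fun p : ℕ × M => dpGamma R N p.1 (f p.2)) (dpMap_wd R f)) (X (n, x))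
  exact h.trans (aeval_X _ _)

noncomputable def dpFwd : DPAlgebra R M ⊗[R] DPAlgebra R N →ₐ[R] DPAlgebra R (M × N) :=
  Algebra.TensorProduct.productMap
    (dpMap R (LinearMap.inl R M N)) (dpMap R (LinearMap.inr R M N))

lemma dpFwd_tmul (u : DPAlgebra R M) (v : DPAlgebra R N) :
    dpFwd R (u ⊗ₜ[R] v) =
      dpMap R (LinearMap.inl R M N) u * dpMap R (LinearMap.inr R M N) v :=
  Algebra.TensorProduct.productMap_apply_tmul _ _ _ _

private lemma dpBwd_wd :
    ∀ a ∈ Ideal.span (dpRelations R (M × N)),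
      aeval (fun p : ℕ × (M × N) => dpPhi R (M := M) (N := N) p.1 p.2.1 p.2.2) a = 0 := by
      suffices h : Ideal.span (dpRelations R (M × N)) ≤
          RingHom.ker (aeval (R := R) fun p : ℕ × (M × N) => dpPhi R p.1 p.2.1 p.2.2) from
        fun a ha => h ha
      rw [Ideal.span_le]
      rintro q (⟨z, rfl⟩ | ⟨s, t, z, rfl⟩ | ⟨n, z, w, hn, rfl⟩ | ⟨n, c, z, hn, rfl⟩) <;>
        simp only [SetLike.mem_coe, RingHom.mem_ker, map_sub, map_mul, map_sum, map_one,
          map_natCast, aeval_X, sub_eq_zero, algebraMap_eq, aeval_C]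
      · rw [dpPhi_zero]
      · rw [dpPhi_mul]
      · show dpPhi R n (z + w).1 (z + w).2 = _
        rw [Prod.fst_add, Prod.snd_add, dpPhi_add,
          Finset.Nat.sum_antidiagonal_eq_sum_range_succ_mk]
      · show dpPhi R n (c • z).1 (c • z).2 = _
        rw [Prod.smul_fst, Prod.smul_snd, dpPhi_smul]

noncomputable def dpBwd : DPAlgebra R (M × N) →ₐ[R] DPAlgebra R M ⊗[R] DPAlgebra R N :=
  Ideal.Quotient.liftₐ (Ideal.span (dpRelations R (M × N)))
    (aeval fun p => dpPhi R p.1 p.2.1 p.2.2) (dpBwd_wd R)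

lemma dpBwd_gamma (n : ℕ) (z : M × N) :
    dpBwd R (dpGamma R (M × N) n z) = dpPhi R n z.1 z.2 := by
  have h := AlgHom.congr_fun (Ideal.Quotient.liftₐ_comp (Ideal.span (dpRelations R (M × N)))
    (aeval fun p : ℕ × (M × N) => dpPhi R (M := M) (N := N) p.1 p.2.1 p.2.2)
    (dpBwd_wd R)) (X (n, z))
  exact h.trans (aeval_X _ _)

end Maps


set_option maxHeartbeats 40000000 in
/-- For `R`-modules `M` and `N`, the multiplication of the divided power algebra
(applied to the images of `Γ_R(M)` and `Γ_R(N)` under the inclusions `M → M ⊕ N`,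
`N → M ⊕ N`) induces an isomorphism of `R`-algebras `Γ_R(M) ⊗_R Γ_R(N) ≅ Γ_R(M ⊕ N)`;
this isomorphism sends `γ_n(x) ⊗ 1` to `γ_n(x,0)` and `1 ⊗ γ_n(y)` to `γ_n(0,y)`. -/
theorem dpAlgebra_exponential (M N : Type*) [AddCommGroup M] [Module R M]
    [AddCommGroup N] [Module R N] :
    ∃ e : (DPAlgebra R M ⊗[R] DPAlgebra R N) ≃ₐ[R] DPAlgebra R (M × N),
      (∀ (n : ℕ) (x : M), e (dpGamma R M n x ⊗ₜ[R] 1) = dpGamma R (M × N) n (x, 0)) ∧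
      (∀ (n : ℕ) (y : N), e ((1 : DPAlgebra R M) ⊗ₜ[R] dpGamma R N n y) =
        dpGamma R (M × N) n (0, y)) := by
  have fwd_phi : ∀ (n : ℕ) (x : M) (y : N),
      dpFwd R (dpPhi R n x y) = dpGamma R (M × N) n (x, y) := by
    intro n x y
    rw [dpPhi, map_sum]
    have : ∀ ab ∈ Finset.HasAntidiagonal.antidiagonal n,
        dpFwd R (dpGamma R M ab.1 x ⊗ₜ[R] dpGamma R N ab.2 y) =
        dpGamma R (M × N) ab.1 (x, 0) * dpGamma R (M × N) ab.2 (0, y) := by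
      intro ab _
      rw [dpFwd_tmul, dpMap_gamma, dpMap_gamma]
      rfl
    rw [Finset.sum_congr rfl this, ← dpGamma_add']
    norm_num
  have h1 : (dpFwd R).comp (dpBwd R (M := M) (N := N)) = AlgHom.id R (DPAlgebra R (M × N)) := by
    apply Ideal.Quotient.algHom_ext
    apply MvPolynomial.algHom_ext
    rintro ⟨n, z⟩
    show dpFwd R (dpBwd R (dpGamma R (M × N) n z)) = dpGamma R (M × N) n z
    rw [dpBwd_gamma, fwd_phi]
  have h2 : (dpBwd R (M := M) (N := N)).comp (dpFwd R) =
      AlgHom.id R (DPAlgebra R M ⊗[R] DPAlgebra R N) := by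
    apply Algebra.TensorProduct.ext
    · apply Ideal.Quotient.algHom_ext
      apply MvPolynomial.algHom_ext
      rintro ⟨n, x⟩
      show dpBwd R (dpFwd R (dpGamma R M n x ⊗ₜ[R] (1 : DPAlgebra R N))) = dpGamma R M n x ⊗ₜ[R] (1 : DPAlgebra R N)
      rw [dpFwd_tmul, map_one, mul_one, dpMap_gamma, dpBwd_gamma]
      exact dpPhi_right_zero R n x
    · apply Ideal.Quotient.algHom_ext
      apply MvPolynomial.algHom_ext
      rintro ⟨n, y⟩
      show dpBwd R (dpFwd R ((1 : DPAlgebra R M) ⊗ₜ[R] dpGamma R N n y)) =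
        (1 : DPAlgebra R M) ⊗ₜ[R] dpGamma R N n y
      rw [dpFwd_tmul, map_one, one_mul, dpMap_gamma, dpBwd_gamma]
      exact dpPhi_left_zero R n y
  refine ⟨AlgEquiv.ofAlgHom (dpFwd R) (dpBwd R) h1 h2, ?_, ?_⟩
  · intro n x
    show dpFwd R (dpGamma R M n x ⊗ₜ[R] (1 : DPAlgebra R N)) = _
    rw [dpFwd_tmul, map_one, mul_one, dpMap_gamma]
    rfl
  · intro n y
    show dpFwd R ((1 : DPAlgebra R M) ⊗ₜ[R] dpGamma R N n y) = _
    rw [dpFwd_tmul, map_one, one_mul, dpMap_gamma]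
    rfl
end
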